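/- arXiv:0908.4064 — 2 statements merged into one kernel-verified Lean document; each statement's English description precedes it below -/
import Mathlib

section
/- If M is an n×n Manin matrix, then the reversed-order relation A_m·M⁽ᵐ⁾·M⁽ᵐ⁻¹⁾⋯M⁽¹⁾ = A_m·M⁽ᵐ⁾⋯M⁽¹⁾·A_m also holds, obtained from the forward relation by conjugating with the longest permutation. -/
open Matrix

/-- `M` is a Manin matrix. -/
def IsManin {R : Type*} [Ring R] {n : ℕ} (M : Matrix (Fin n) (Fin n) R) : Prop :=
  (∀ i k j l : Fin n, i < k → j < l →
    M i j * M k l - M k l * M i j = M k j * M i l - M i l * M k j) ∧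
  (∀ i k j : Fin n, M i j * M k j = M k j * M i j)

/-- `M` acting in the `k`-th tensor leg of (ℂⁿ)^{⊗m} (identity elsewhere). -/
def leg {R : Type*} [Ring R] {n m : ℕ} (M : Matrix (Fin n) (Fin n) R) (k : Fin m) :
    Matrix (Fin m → Fin n) (Fin m → Fin n) R :=
  fun f g => if ∀ l, l ≠ k → f l = g l then M (f k) (g k) else 0

/-- Standard permutation representation of S_m on (ℂⁿ)^{⊗m}:
π(σ)(v₁⊗⋯⊗v_m) = v_{σ⁻¹(1)}⊗⋯⊗v_{σ⁻¹(m)}. -/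
def permMat (R : Type*) [Ring R] (n : ℕ) {m : ℕ} (σ : Equiv.Perm (Fin m)) :
    Matrix (Fin m → Fin n) (Fin m → Fin n) R :=
  fun f g => if f = g ∘ ⇑σ⁻¹ then 1 else 0

/-- The antisymmetrizer A_m = (1/m!) Σ_{σ ∈ S_m} sgn(σ) π(σ) on (ℂⁿ)^{⊗m}. -/
noncomputable def antisym (R : Type*) [Ring R] [Algebra ℚ R] (n m : ℕ) :
    Matrix (Fin m → Fin n) (Fin m → Fin n) R :=
  ((m.factorial : ℚ)⁻¹) •
    ∑ σ : Equiv.Perm (Fin m), ((Equiv.Perm.sign σ : ℤ) : ℚ) • permMat R n σ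

/-- The ordered product M⁽¹⁾·M⁽²⁾⋯M⁽ᵐ⁾ on (ℂⁿ)^{⊗m}. -/
def legProd {R : Type*} [Ring R] {n : ℕ} (M : Matrix (Fin n) (Fin n) R) (m : ℕ) :
    Matrix (Fin m → Fin n) (Fin m → Fin n) R :=
  (List.ofFn fun k : Fin m => leg M k).prod

/-- The reversed ordered product M⁽ᵐ⁾·M⁽ᵐ⁻¹⁾⋯M⁽¹⁾ on (ℂⁿ)^{⊗m}. -/
def legProdRev {R : Type*} [Ring R] {n : ℕ} (M : Matrix (Fin n) (Fin n) R) (m : ℕ) :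
    Matrix (Fin m → Fin n) (Fin m → Fin n) R :=
  (List.ofFn fun k : Fin m => leg M k).reverse.prod

/-!
Write `X = A_m·M⁽ᵐ⁾⋯M⁽¹⁾`. Since `A_m` is a normalised signed sum of the `π(σ)`, we get `X·A_m = X`
as soon as `X·π(σ) = sgn(σ)·X` for every `σ`, and it suffices to check this on the adjacent
transpositions `s = (k k+1)`. The matrix `π(s)` commutes with every leg other than `k` and `k+1`,
and the Manin relations say exactly that `π(s)·M⁽ᵏ⁺¹⁾M⁽ᵏ⁾·(1 + π(s)) = M⁽ᵏ⁺¹⁾M⁽ᵏ⁾·(1 + π(s))`.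
Moving this `π(s)` to the left through `M⁽ᵐ⁾⋯M⁽ᵏ⁺²⁾` into `A_m`, where `A_m·π(s) = -A_m`, shows
that `X·(1 + π(s))` equals its own negative, hence vanishes because `2` is invertible.
-/

section PermMat
variable {R : Type*} [Ring R] {n m : ℕ}

lemma permMat_eq_toMatrix (σ : Equiv.Perm (Fin m)) :
    permMat R n σ = (σ⁻¹.arrowCongr (Equiv.refl (Fin n))).toPEquiv.toMatrix := by
  ext f g
  simp only [permMat, PEquiv.toMatrix_apply, Equiv.toPEquiv_apply, Option.mem_def,
    Option.some.injEq, Equiv.Perm.inv_def, Equiv.eq_comp_symm]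
  rfl

lemma permMat_mul_eq_submatrix (σ : Equiv.Perm (Fin m))
    (B : Matrix (Fin m → Fin n) (Fin m → Fin n) R) :
    permMat R n σ * B = B.submatrix (· ∘ σ) id := by
  rw [permMat_eq_toMatrix, PEquiv.toMatrix_toPEquiv_mul]; rfl

lemma mul_permMat_eq_submatrix (σ : Equiv.Perm (Fin m))
    (B : Matrix (Fin m → Fin n) (Fin m → Fin n) R) :
    B * permMat R n σ = B.submatrix id (· ∘ ⇑σ⁻¹) := by
  rw [permMat_eq_toMatrix, PEquiv.mul_toMatrix_toPEquiv]; rfl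

lemma permMat_mul (σ τ : Equiv.Perm (Fin m)) :
    permMat R n σ * permMat R n τ = permMat R n (σ * τ) := by
  simp only [permMat_eq_toMatrix, ← PEquiv.toMatrix_trans, ← Equiv.toPEquiv_trans]
  rfl

lemma permMat_one : permMat R n (1 : Equiv.Perm (Fin m)) = 1 := by
  rw [permMat_eq_toMatrix]
  exact PEquiv.toMatrix_refl

lemma permMat_mul_leg (σ : Equiv.Perm (Fin m)) (M : Matrix (Fin n) (Fin n) R) (k : Fin m) :
    permMat R n σ * leg M k = leg M (σ k) * permMat R n σ := by
  ext f g
  rw [permMat_mul_eq_submatrix, mul_permMat_eq_submatrix]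
  have hcond : (∀ l, l ≠ σ k → f l = g (σ.symm l)) ↔ ∀ l, l ≠ k → f (σ l) = g l := by
    rw [← σ.forall_congr_right]
    simp [σ.injective.ne_iff]
  simp only [submatrix_apply, leg, Function.comp_apply, id, hcond, Equiv.Perm.inv_def,
    Equiv.symm_apply_apply]

lemma commute_permMat_leg {σ : Equiv.Perm (Fin m)} (M : Matrix (Fin n) (Fin n) R) {k : Fin m}
    (h : σ k = k) : Commute (permMat R n σ) (leg M k) := by
  rw [Commute, SemiconjBy, permMat_mul_leg, h]

end PermMat

section Manin
variable {R : Type*} [Ring R] {n m : ℕ}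

lemma leg_mul_leg_apply (M : Matrix (Fin n) (Fin n) R) {k k' : Fin m} (hne : k' ≠ k)
    (f g : Fin m → Fin n) :
    (leg M k' * leg M k) f g =
      if ∀ l, l ≠ k → l ≠ k' → f l = g l then M (f k') (g k') * M (f k) (g k) else 0 := by
  rw [Matrix.mul_apply]
  split_ifs with hfg
  · rw [Finset.sum_eq_single (Function.update f k' (g k'))]
    · have h₁ : ∀ l, l ≠ k' → f l = Function.update f k' (g k') l := fun l hl => by
        rw [Function.update_of_ne hl]
      have h₂ : ∀ l, l ≠ k → Function.update f k' (g k') l = g l := fun l hl => by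
        by_cases hl' : l = k'
        · rw [hl', Function.update_self]
        · rw [Function.update_of_ne hl']; exact hfg l hl hl'
      simp only [leg, if_pos h₁, if_pos h₂, Function.update_self, Function.update_of_ne hne.symm]
    · intro h _ hh
      simp only [leg]
      split_ifs with h₁ h₂
      · refine absurd (funext fun l => ?_) hh
        by_cases hl : l = k'
        · rw [hl, Function.update_self]; exact h₂ k' hne
        · rw [Function.update_of_ne hl]; exact (h₁ l hl).symm
      all_goals simp
    · simp
  · refine Finset.sum_eq_zero fun h _ => ?_
    simp only [leg]
    split_ifs with h₁ h₂
    · exact absurd (fun l hl hl' => (h₁ l hl').trans (h₂ l hl)) hfg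
    all_goals simp

lemma IsManin.mul_add_mul_eq_mul_add_mul {M : Matrix (Fin n) (Fin n) R} (hM : IsManin M)
    (a b c d : Fin n) :
    M a c * M b d + M a d * M b c = M b c * M a d + M b d * M a c := by
  obtain ⟨hcross, hcol⟩ := hM
  have key : ∀ {a b c d}, a < b → c < d →
      M a c * M b d + M a d * M b c = M b c * M a d + M b d * M a c := fun hab hcd =>
    sub_eq_sub_iff_add_eq_add.mp (hcross _ _ _ _ hab hcd)
  rcases eq_or_ne a b with rfl | hab
  · rfl
  rcases eq_or_ne c d with rfl | hcd
  · rw [hcol a b c]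
  rcases hab.lt_or_gt with hab | hab <;> rcases hcd.lt_or_gt with hcd | hcd
  · exact key hab hcd
  · rw [add_comm (M a c * M b d), add_comm (M b c * M a d)]; exact key hab hcd
  · exact (key hab hcd).symm
  · rw [add_comm (M a c * M b d), add_comm (M b c * M a d)]; exact (key hab hcd).symm

lemma IsManin.permMat_swap_mul_leg_mul_leg_mul_one_add {M : Matrix (Fin n) (Fin n) R}
    (hM : IsManin M) {k k' : Fin m} (hne : k' ≠ k) :
    permMat R n (Equiv.swap k k') * (leg M k' * leg M k * (1 + permMat R n (Equiv.swap k k')))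
      = leg M k' * leg M k * (1 + permMat R n (Equiv.swap k k')) := by
  ext f g
  simp only [permMat_mul_eq_submatrix, mul_add, mul_one, mul_permMat_eq_submatrix, submatrix_apply,
    Matrix.add_apply, id, Equiv.swap_inv, leg_mul_leg_apply M hne]
  simp +contextual only [Function.comp_apply, Equiv.swap_apply_left, Equiv.swap_apply_right,
    Equiv.swap_apply_of_ne_of_ne, ne_eq, not_false_eq_true]
  split_ifs
  · exact hM.mul_add_mul_eq_mul_add_mul (f k) (f k') (g k') (g k)
  · rfl

end Manin

lemma mul_mul_eq_neg_of_mul_eq_neg {S : Type*} [Ring S] [Module ℚ S] {a u y w p : S}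
    (ha : a * p = -a) (hu : Commute p u) (hw : Commute p w) (hy : p * (y * (1 + p)) = y * (1 + p)) :
    a * (u * y * w) * p = -(a * (u * y * w)) := by
  have hay : a * u * (y * (1 + p)) = 0 := by
    have h : a * u * (y * (1 + p)) = -(a * u * (y * (1 + p))) := calc
      a * u * (y * (1 + p)) = a * p * u * (y * (1 + p)) := by
        rw [mul_assoc a p u, hu.eq, ← mul_assoc a u p, mul_assoc (a * u) p, hy]
      _ = -(a * u * (y * (1 + p))) := by rw [ha, neg_mul, neg_mul]
    have h2 : (2 : ℚ) • (a * u * (y * (1 + p))) = 0 := by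
      rw [two_smul]; nth_rw 2 [h]; exact add_neg_cancel _
    exact (smul_eq_zero.mp h2).resolve_left two_ne_zero
  have hw' : w * (1 + p) = (1 + p) * w := by
    rw [mul_add, add_mul, mul_one, one_mul, hw.eq]
  have h : a * (u * y * w) * (1 + p) = 0 := calc
    _ = a * u * (y * (1 + p)) * w := by simp only [mul_assoc, hw']
    _ = 0 := by rw [hay, zero_mul]
  rw [mul_add, mul_one] at h
  exact eq_neg_of_add_eq_zero_right h

lemma Equiv.Perm.sign_cast_mul_self {α : Type*} [DecidableEq α] [Fintype α] (σ : Equiv.Perm α) :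
    ((Equiv.Perm.sign σ : ℤ) : ℚ) * ((Equiv.Perm.sign σ : ℤ) : ℚ) = 1 := by
  rw [← Int.cast_mul, ← Units.val_mul, Int.units_mul_self, Units.val_one, Int.cast_one]

section Antisymmetrizer
variable {R : Type*} [Ring R] [Algebra ℚ R] {n m : ℕ}

lemma antisym_mul_permMat (τ : Equiv.Perm (Fin m)) :
    antisym R n m * permMat R n τ = ((Equiv.Perm.sign τ : ℤ) : ℚ) • antisym R n m := by
  have hterm : ∀ σ : Equiv.Perm (Fin m),
      (((Equiv.Perm.sign σ : ℤ) : ℚ) • permMat R n σ) * permMat R n τ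
        = ((Equiv.Perm.sign τ : ℤ) : ℚ) •
            (((Equiv.Perm.sign (σ * τ) : ℤ) : ℚ) • permMat R n (σ * τ)) := fun σ => by
    rw [smul_mul_assoc, permMat_mul, smul_smul, Equiv.Perm.sign_mul, Units.val_mul, Int.cast_mul,
      mul_left_comm, Equiv.Perm.sign_cast_mul_self, mul_one]
  rw [antisym, smul_mul_assoc, Finset.sum_mul, Finset.sum_congr rfl fun σ _ => hterm σ,
    ← Finset.smul_sum, smul_comm]
  exact congrArg _ <| congrArg _ <|
    Equiv.sum_comp (Equiv.mulRight τ) fun σ => ((Equiv.Perm.sign σ : ℤ) : ℚ) • permMat R n σ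

lemma mul_antisym_of_mul_permMat {X : Matrix (Fin m → Fin n) (Fin m → Fin n) R}
    (hX : ∀ σ, X * permMat R n σ = ((Equiv.Perm.sign σ : ℤ) : ℚ) • X) :
    X * antisym R n m = X := by
  have hterm : ∀ σ : Equiv.Perm (Fin m),
      X * (((Equiv.Perm.sign σ : ℤ) : ℚ) • permMat R n σ) = X := fun σ => by
    rw [mul_smul_comm, hX, smul_smul, Equiv.Perm.sign_cast_mul_self, one_smul]
  rw [antisym, mul_smul_comm, Finset.mul_sum, Finset.sum_congr rfl fun σ _ => hterm σ,
    Finset.sum_const, Finset.card_univ, Fintype.card_perm, Fintype.card_fin,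
    ← Nat.cast_smul_eq_nsmul ℚ, smul_smul,
    inv_mul_cancel₀ (Nat.cast_ne_zero.mpr m.factorial_ne_zero), one_smul]

lemma mul_permMat_eq_sign_smul_of_swap {X : Matrix (Fin m → Fin n) (Fin m → Fin n) R}
    (hX : ∀ i j : Fin m, (j : ℕ) = i + 1 → X * permMat R n (Equiv.swap i j) = -X)
    (σ : Equiv.Perm (Fin m)) :
    X * permMat R n σ = ((Equiv.Perm.sign σ : ℤ) : ℚ) • X := by
  cases m with
  | zero => simp [Subsingleton.elim σ 1, permMat_one]
  | succ m =>
    have hσ : σ ∈ Submonoid.closure (Set.range fun i : Fin m => Equiv.swap i.castSucc i.succ) := by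
      rw [Equiv.Perm.mclosure_swap_castSucc_succ]
      exact Submonoid.mem_top σ
    induction hσ using Submonoid.closure_induction with
    | mem τ hτ =>
      obtain ⟨i, rfl⟩ := hτ
      rw [hX _ _ (by simp), Equiv.Perm.sign_swap Fin.castSucc_lt_succ.ne]
      simp
    | one => simp [permMat_one]
    | mul τ₁ τ₂ _ _ ih₁ ih₂ =>
      rw [← permMat_mul, ← mul_assoc, ih₁, smul_mul_assoc, ih₂, smul_smul, Equiv.Perm.sign_mul,
        Units.val_mul, Int.cast_mul, mul_comm]

lemma IsManin.antisym_mul_prod_map_leg_mul_permMat_swap {M : Matrix (Fin n) (Fin n) R}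
    (hM : IsManin M) {w : List (Fin m)} (hw : w.Nodup) {k k' : Fin m} (hkk' : [k', k] <:+: w) :
    antisym R n m * (w.map (leg M)).prod * permMat R n (Equiv.swap k k')
      = -(antisym R n m * (w.map (leg M)).prod) := by
  obtain ⟨w₁, w₂, rfl⟩ := hkk'
  simp only [List.append_assoc, List.cons_append, List.nil_append, List.nodup_middle,
    List.nodup_cons, List.mem_append, List.mem_cons, not_or] at hw
  obtain ⟨⟨hk'₁, hne, hk'₂⟩, ⟨hk₁, hk₂⟩, -⟩ := hw
  have hcomm : ∀ v : List (Fin m), k ∉ v → k' ∉ v →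
      Commute (permMat R n (Equiv.swap k k')) (v.map (leg M)).prod := fun v hk hk' =>
    Commute.list_prod_right _ _ <| by
      simp only [List.mem_map]
      rintro _ ⟨l, hl, rfl⟩
      exact commute_permMat_leg M
        (Equiv.swap_apply_of_ne_of_ne (ne_of_mem_of_not_mem hl hk) (ne_of_mem_of_not_mem hl hk'))
  have hAP : antisym R n m * permMat R n (Equiv.swap k k') = -antisym R n m := by
    rw [antisym_mul_permMat, Equiv.Perm.sign_swap (Ne.symm hne)]
    simp
  have hprod : ((w₁ ++ [k', k] ++ w₂).map (leg M)).prod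
      = (w₁.map (leg M)).prod * (leg M k' * leg M k) * (w₂.map (leg M)).prod := by
    simp [List.prod_append, mul_assoc]
  rw [hprod]
  exact mul_mul_eq_neg_of_mul_eq_neg hAP (hcomm w₁ hk₁ hk'₁) (hcomm w₂ hk₂ hk'₂)
    (hM.permMat_swap_mul_leg_mul_leg_mul_one_add hne)

end Antisymmetrizer

lemma List.pair_infix_finRange {m : ℕ} {i j : Fin m} (hij : (j : ℕ) = i + 1) :
    [i, j] <:+: List.finRange m := by
  have hj : (i : ℕ) + 1 < (List.finRange m).length := by simp only [List.length_finRange]; omega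
  refine ⟨(List.finRange m).take i, (List.finRange m).drop (i + 2), ?_⟩
  conv_rhs => rw [← List.take_append_drop i (List.finRange m),
    List.drop_eq_getElem_cons (by omega), List.drop_eq_getElem_cons hj]
  simp [hij, Fin.ext_iff]

lemma legProdRev_eq_prod_map {R : Type*} [Ring R] {n : ℕ} (M : Matrix (Fin n) (Fin n) R) (m : ℕ) :
    legProdRev M m = ((List.finRange m).reverse.map (leg M)).prod := by
  rw [legProdRev, List.ofFn_eq_map, List.map_reverse]

/-- for a Manin matrix M, the reversed-order relation
A_m·M⁽ᵐ⁾⋯M⁽¹⁾ = A_m·M⁽ᵐ⁾⋯M⁽¹⁾·A_m holds for every m. -/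
theorem antisym_legProdRev_of_manin {R : Type*} [Ring R] [Algebra ℚ R] {n : ℕ}
    (M : Matrix (Fin n) (Fin n) R) (hM : IsManin M) (m : ℕ) :
    antisym R n m * legProdRev M m = antisym R n m * legProdRev M m * antisym R n m := by
  refine (mul_antisym_of_mul_permMat (mul_permMat_eq_sign_smul_of_swap fun i j hij => ?_)).symm
  rw [legProdRev_eq_prod_map]
  exact hM.antisym_mul_prod_map_leg_mul_permMat_swap (List.nodup_reverse.mpr (List.nodup_finRange m))
    (List.reverse_infix.mpr (List.pair_infix_finRange hij))
end

section
/- For a Manin matrix M of size n×n, the column determinant det M = Σ_{σ∈S_n} sgn(σ) M_{σ(1),1} M_{σ(2),2} ⋯ M_{σ(n),n} equals tr(A_n · M⁽¹⁾M⁽²⁾⋯M⁽ⁿ⁾), where A_n is the full antisymmetrizer on (ℂⁿ)^{⊗n} and the trace is over all n tensor factors. -/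
open Matrix

/-- The column determinant Σ_σ sgn(σ) M_{σ(1),1}⋯M_{σ(n),n}. -/
def cdet {R : Type*} [Ring R] {n : ℕ} (M : Matrix (Fin n) (Fin n) R) : R :=
  ∑ σ : Equiv.Perm (Fin n),
    (Equiv.Perm.sign σ : ℤ) • (List.ofFn fun j => M (σ j) j).prod

/-!
Expanding the trace over the standard basis of `(Rⁿ)^{⊗n}`, the term of `π(σ)` at the basis
vector indexed by `f : Fin n → Fin n` is `∏ₖ M (f (σ k)) (f k)`, so summing over `σ` with signs
gives `cdet (M.submatrix f f)`. If `f` is not injective this matrix has two equal rows and its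
column determinant vanishes, as for any matrix. If `f` is a permutation, its rows and columns are
both permuted by `f`: permuting rows multiplies `cdet` by the sign for any matrix, and permuting
columns does so for a Manin matrix, because an adjacent column transposition reverses the sign by
the Manin relations. Hence the sum over `f` is `n! · cdet M`, which the factor `1/n!` cancels.
-/

open Equiv Finset

theorem Equiv.Perm.sum_sign_smul_eq_zero_of_involutive {α A : Type*} [Fintype α] [DecidableEq α]
    [AddCommGroup A] (f : Perm α → A) {g : Perm α → Perm α} (hg : Function.Involutive g)
    (hsign : ∀ σ, Perm.sign (g σ) = -Perm.sign σ) (hf : ∀ σ, f (g σ) = f σ) :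
    ∑ σ, (Perm.sign σ : ℤ) • f σ = 0 :=
  sum_ninvolution g (fun σ => by rw [hsign, hf, Units.val_neg, neg_smul, add_neg_cancel])
    (fun σ _ hσ => units_ne_neg_self _ (hσ ▸ hsign σ)) (fun _ => mem_univ _) hg

theorem List.prod_ofFn_eq_take_mul_mul_drop {M : Type*} [Monoid M] {m : ℕ}
    {F G : Fin (m + 1) → M} (i : Fin m) (h : ∀ k, k ≠ i.castSucc → k ≠ i.succ → F k = G k) :
    (List.ofFn F).prod =
      ((List.ofFn G).take i).prod * (F i.castSucc * F i.succ) *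
        ((List.ofFn G).drop (i + 2)).prod := by
  have htake : (List.ofFn F).take i = (List.ofFn G).take i := by
    refine List.ext_getElem (by simp) fun p hp _ => ?_
    simp only [List.length_take, List.length_ofFn, lt_min_iff] at hp
    simp only [List.getElem_take, List.getElem_ofFn]
    exact h _ (Fin.ne_of_lt (by simp [Fin.lt_def, hp.1]))
      (Fin.ne_of_lt (by simp [Fin.lt_def]; omega))
  have hdrop : (List.ofFn F).drop (i + 2) = (List.ofFn G).drop (i + 2) := by
    refine List.ext_getElem (by simp) fun p hp _ => ?_
    simp only [List.getElem_drop, List.getElem_ofFn]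
    exact h _ (Fin.ne_of_gt (by simp [Fin.lt_def]; omega))
      (Fin.ne_of_gt (by simp [Fin.lt_def]; omega))
  rw [← List.prod_take_mul_prod_drop (List.ofFn F) (i + 2), List.prod_take_succ _ _ (by simp),
    List.prod_take_succ _ _ (by simp), htake, hdrop, List.getElem_ofFn, List.getElem_ofFn,
    ← mul_assoc]
  rfl

section ColumnDeterminant

variable {R : Type*} [Ring R] {n : ℕ}

theorem cdet_permute (σ : Perm (Fin n)) (N : Matrix (Fin n) (Fin n) R) :
    cdet (N.submatrix σ id) = (Perm.sign σ : ℤ) • cdet N := by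
  rw [cdet, cdet, smul_sum]
  refine Fintype.sum_equiv (Equiv.mulLeft σ) _ _ fun π => ?_
  simp only [submatrix_apply, id, coe_mulLeft, Perm.mul_apply, smul_smul, Perm.sign_mul,
    ← Units.val_mul, ← mul_assoc, Int.units_mul_self, one_mul]

theorem cdet_zero_of_row_eq {N : Matrix (Fin n) (Fin n) R} {i j : Fin n} (hij : i ≠ j)
    (h : N i = N j) : cdet N = 0 := by
  have hswap : ∀ x, N (swap i j x) = N x := by
    intro x
    rcases eq_or_ne x i with rfl | hi
    · simp [h]
    rcases eq_or_ne x j with rfl | hj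
    · simp [h]
    rw [swap_apply_of_ne_of_ne hi hj]
  refine Perm.sum_sign_smul_eq_zero_of_involutive _ (g := (swap i j * ·))
    (fun σ => swap_mul_self_mul i j σ)
    (fun σ => by rw [Perm.sign_mul, Perm.sign_swap hij, neg_one_mul]) fun σ => ?_
  simp only [Perm.mul_apply, hswap]

end ColumnDeterminant

namespace IsManin

variable {R : Type*} [Ring R] {n : ℕ} {M : Matrix (Fin n) (Fin n) R}

theorem cross_comm (hM : IsManin M) (a b j l : Fin n) :
    M a j * M b l + M a l * M b j = M b j * M a l + M b l * M a j := by
  have of_lt : ∀ a b j l : Fin n, j < l →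
      M a j * M b l + M a l * M b j = M b j * M a l + M b l * M a j := by
    intro a b j l hjl
    rcases lt_trichotomy a b with hab | rfl | hab
    · exact sub_eq_sub_iff_add_eq_add.mp (hM.1 a b j l hab hjl)
    · rfl
    · exact (sub_eq_sub_iff_add_eq_add.mp (hM.1 b a j l hab hjl)).symm
  rcases lt_trichotomy j l with hjl | rfl | hjl
  · exact of_lt a b j l hjl
  · rw [hM.2 a b j]
  · rw [add_comm, add_comm (M b j * M a l)]
    exact of_lt a b l j hjl

theorem submatrix (hM : IsManin M) {m : ℕ} (r c : Fin m → Fin n) :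
    IsManin (M.submatrix r c) :=
  ⟨fun _ _ _ _ _ _ => sub_eq_sub_iff_add_eq_add.mpr (hM.cross_comm ..),
    fun _ _ _ => hM.2 ..⟩

theorem cdet_swap_castSucc_succ {m : ℕ} {N : Matrix (Fin (m + 1)) (Fin (m + 1)) R}
    (hN : IsManin N) (i : Fin m) :
    cdet (N.submatrix id (swap i.castSucc i.succ)) = -cdet N := by
  set s := swap i.castSucc i.succ
  have hs : i.castSucc ≠ i.succ := Fin.castSucc_lt_succ.ne
  let T : Perm (Fin (m + 1)) → R := fun σ =>
    (List.ofFn fun k => N (σ k) (s k)).prod + (List.ofFn fun k => N (σ k) k).prod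
  -- Only the factors in positions `i, i + 1` change, and their sum is invariant by `cross_comm`.
  have hT : ∀ σ, T (σ * s) = T σ := by
    intro σ
    have hfix : ∀ k, k ≠ i.castSucc → k ≠ i.succ → s k = k := fun _ => swap_apply_of_ne_of_ne
    have hsplit := fun F =>
      List.prod_ofFn_eq_take_mul_mul_drop (F := F) (G := fun k => N (σ k) k) i
    simp only [T]
    rw [hsplit, hsplit, hsplit, hsplit, ← add_mul, ← mul_add, ← add_mul, ← mul_add]
    · congr 2
      simp only [Perm.mul_apply, s, swap_apply_left, swap_apply_right]
      exact (add_comm _ _).trans ((hN.cross_comm _ _ _ _).symm.trans (add_comm _ _))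
    all_goals exact fun k hc hu => by simp only [Perm.mul_apply, hfix k hc hu]
  have hsum := Perm.sum_sign_smul_eq_zero_of_involutive T (g := (· * s))
    (fun σ => mul_swap_mul_self _ _ σ)
    (fun σ => by rw [Perm.sign_mul, Perm.sign_swap hs, mul_neg_one]) hT
  rw [eq_neg_iff_add_eq_zero, ← hsum]
  simp only [T, cdet, submatrix_apply, id, smul_add, sum_add_distrib]

theorem cdet_permute' (hM : IsManin M)
    (τ : Perm (Fin n)) : cdet (M.submatrix id τ) = (Perm.sign τ : ℤ) • cdet M := by
  cases n with
  | zero => simp [Subsingleton.elim τ 1]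
  | succ m =>
    have hτ : τ ∈ Submonoid.closure (Set.range fun i : Fin m => swap i.castSucc i.succ) := by
      rw [Perm.mclosure_swap_castSucc_succ]; trivial
    induction hτ using Submonoid.closure_induction generalizing M with
    | mem _ hs =>
      obtain ⟨i, rfl⟩ := hs
      rw [hM.cdet_swap_castSucc_succ, Perm.sign_swap Fin.castSucc_lt_succ.ne]
      simp
    | one => simp
    | mul x y _ _ ihx ihy =>
      rw [show M.submatrix id ⇑(x * y) = (M.submatrix id x).submatrix id y from rfl,
        ihy (hM.submatrix id x), ihx hM, smul_smul, Perm.sign_mul, Units.val_mul, mul_comm]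

theorem cdet_submatrix_perm (hM : IsManin M)
    (τ : Perm (Fin n)) : cdet (M.submatrix τ τ) = cdet M := by
  rw [show M.submatrix τ τ = (M.submatrix τ id).submatrix id τ from rfl,
    (hM.submatrix τ id).cdet_permute', cdet_permute, smul_smul, ← Units.val_mul,
    Int.units_mul_self, Units.val_one, one_smul]

theorem sum_cdet_submatrix_self (hM : IsManin M) :
    ∑ f : Fin n → Fin n, cdet (M.submatrix f f) = n.factorial • cdet M := by
  calc ∑ f : Fin n → Fin n, cdet (M.submatrix f f)
      = ∑ τ : Perm (Fin n), cdet (M.submatrix τ τ) := by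
        rw [← sum_subset (subset_univ (univ.map ⟨((⇑) : Perm (Fin n) → Fin n → Fin n),
          DFunLike.coe_injective⟩)), sum_map]
        · rfl
        intro f _ hf
        obtain ⟨a, b, hfab, hab⟩ := Function.not_injective_iff.mp fun hinj =>
          hf (mem_map.mpr ⟨Equiv.ofBijective f hinj.bijective_of_finite, mem_univ _, rfl⟩)
        exact cdet_zero_of_row_eq hab (funext fun j => by simp [hfab])
    _ = n.factorial • cdet M := by
        simp [hM.cdet_submatrix_perm, Fintype.card_perm]

end IsManin

section TensorLegs

variable {R : Type*} [Ring R] {n m : ℕ}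

theorem prod_map_leg_apply (M : Matrix (Fin n) (Fin n) R) {l : List (Fin m)} (hl : l.Nodup)
    (f g : Fin m → Fin n) :
    (l.map (leg M)).prod f g =
      if ∀ p ∉ l, f p = g p then (l.map fun k => M (f k) (g k)).prod else 0 := by
  induction l generalizing f with
  | nil => simp [one_apply, funext_iff]
  | cons k l ih =>
    obtain ⟨hk, hl⟩ := List.nodup_cons.mp hl
    set h₀ := Function.update f k (g k)
    have h₀_of_ne : ∀ p, p ≠ k → h₀ p = f p := fun _ hp => Function.update_of_ne hp _ _
    rw [List.map_cons, List.prod_cons, mul_apply, sum_eq_single h₀]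
    · have hleg : leg M k f h₀ = M (f k) (g k) := by
        rw [leg, if_pos fun p hp => (h₀_of_ne p hp).symm]
        simp only [h₀, Function.update_self]
      have hprod : (l.map fun p => M (h₀ p) (g p)) = l.map fun p => M (f p) (g p) :=
        List.map_congr_left fun p hp => by rw [h₀_of_ne p (ne_of_mem_of_not_mem hp hk)]
      have hcond : (∀ p ∉ l, h₀ p = g p) ↔ ∀ p ∉ k :: l, f p = g p := by
        refine ⟨fun h p hp => ?_, fun h p hp => ?_⟩
        · simp only [List.mem_cons, not_or] at hp
          obtain ⟨hpk, hpl⟩ := hp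
          rw [← h₀_of_ne p hpk, h p hpl]
        · rcases eq_or_ne p k with rfl | hpk
          · exact Function.update_self ..
          · rw [h₀_of_ne p hpk, h p (by simp [hpk, hp])]
      rw [hleg, ih hl, hprod]
      simp only [hcond, List.map_cons, List.prod_cons]
      split_ifs <;> simp
    · intro h _ hh
      by_cases hf : ∀ p, p ≠ k → f p = h p
      · have hhk : h k ≠ g k := fun hhk => hh (by
          funext p
          rcases eq_or_ne p k with rfl | hp
          · simp [h₀, hhk]
          · rw [h₀_of_ne p hp, hf p hp])
        rw [ih hl, if_neg fun hc => hhk (hc k hk), mul_zero]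
      · rw [leg, if_neg hf, zero_mul]
    · simp

theorem legProd_apply (M : Matrix (Fin n) (Fin n) R) (f g : Fin m → Fin n) :
    legProd M m f g = (List.ofFn fun k => M (f k) (g k)).prod := by
  rw [legProd, List.ofFn_eq_map, prod_map_leg_apply M (List.nodup_finRange m),
    if_pos fun p hp => absurd (List.mem_finRange p) hp, ← List.ofFn_eq_map]

theorem permMat_mul_apply (σ : Perm (Fin m)) (P : Matrix (Fin m → Fin n) (Fin m → Fin n) R)
    (f g : Fin m → Fin n) : (permMat R n σ * P) f g = P (f ∘ σ) g := by
  simp only [mul_apply, permMat, Perm.inv_def, eq_comp_symm, ite_mul, one_mul, zero_mul,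
    sum_ite_eq, mem_univ, if_true]

theorem trace_antisym_mul [Algebra ℚ R] (P : Matrix (Fin m → Fin n) (Fin m → Fin n) R) :
    trace (antisym R n m * P) =
      (m.factorial : ℚ)⁻¹ • ∑ f : Fin m → Fin n, ∑ σ : Perm (Fin m),
        (Perm.sign σ : ℤ) • P (f ∘ σ) f := by
  rw [antisym, smul_mul_assoc, trace_smul, sum_mul, trace_sum]
  simp only [smul_mul_assoc, trace_smul, Int.cast_smul_eq_zsmul]
  simp only [trace, diag_apply, permMat_mul_apply, smul_sum]
  rw [sum_comm]

end TensorLegs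

/-- for a Manin matrix M,
det_col M = tr(A_n · M⁽¹⁾M⁽²⁾⋯M⁽ⁿ⁾) where the trace is over all n tensor factors. -/
theorem cdet_eq_trace_antisym {R : Type*} [Ring R] [Algebra ℚ R] {n : ℕ}
    (M : Matrix (Fin n) (Fin n) R) (hM : IsManin M) :
    cdet M = Matrix.trace (antisym R n n * legProd M n) := by
  have hterm : ∀ f : Fin n → Fin n,
      ∑ σ : Perm (Fin n), (Perm.sign σ : ℤ) • legProd M n (f ∘ σ) f = cdet (M.submatrix f f) :=
    fun f => by simp only [legProd_apply]; rfl
  rw [trace_antisym_mul, sum_congr rfl fun f _ => hterm f, hM.sum_cdet_submatrix_self,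
    ← Nat.cast_smul_eq_nsmul ℚ, smul_smul, inv_mul_cancel₀ (by positivity), one_smul]
end
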